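/- In the constructed instance for sacrificing return for less volatility, if a subset T ⊆ {1,…,m} with |T| = k meets the performance bound, then T also meets the volatility bound, i.e., Δ(T,t) ≤ β·Δ(M,t) for all t = 2,…,f. -/

import Mathlib

/-!
The odd and even padding columns make the market index alternate between `v₁ / B` and
`v₁ ⌊B/α⌋ / B`, so the squared deviations of the market returns add up to at least
`(P - 2) (log ⌊B/α⌋)²` once `t ≥ P`.

A portfolio of `k` stocks misses one of the `k + 1` adjustment rows. At the column of that row the
market grows by `⌊B/α⌋ / B > (B - α) / B`, which a portfolio holding a non-coding stock cannot
match, so the portfolio consists of coding rows. Its index is then `v₁` up to time `P`, and in each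
coding column it is `c v₁` where `c` counts the chosen sets containing the element; the performance
bound forces `1 ≤ c ≤ k`. Hence every return of the portfolio is `0` or at most `log k` in absolute
value, and its squared deviations add up to at most `s (log k)²`. Finally `s ≤ P - 2`, and
`q ≥ 1 / β` gives `log k ≤ β log ⌊B/α⌋`.
-/



/-- Price-weighted index of the set of stocks `T` at time `t`,
given prices `Sp`. -/
noncomputable def phi1 (Sp : ℕ → ℕ → ℝ) (T : Finset ℕ) (t : ℕ) : ℝ :=
  (∑ i ∈ T, Sp i t) / T.card

/-- One-period return of the set of stocks `T` at time `t ≥ 1`. -/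
noncomputable def ret (Sp : ℕ → ℕ → ℝ) (T : Finset ℕ) (t : ℕ) : ℝ :=
  Real.log (phi1 Sp T t / phi1 Sp T (t - 1))

/-- Average return of the set of stocks `T` up to time `t ≥ 1`. -/
noncomputable def avgRet (Sp : ℕ → ℕ → ℝ) (T : Finset ℕ) (t : ℕ) : ℝ :=
  (∑ i ∈ Finset.Icc 1 t, ret Sp T i) / t

/-- Volatility of the set of stocks `T` up to time `t ≥ 2`. -/
noncomputable def vol (Sp : ℕ → ℕ → ℝ) (T : Finset ℕ) (t : ℕ) : ℝ :=
  Real.sqrt ((∑ i ∈ Finset.Icc 1 t, (ret Sp T i - avgRet Sp T t) ^ 2) /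
    ((t : ℝ) - 1))

open Finset Real

theorem Finset.sum_sq_sub_mean_le_sum_sq {ι : Type*} (s : Finset ι) (r : ι → ℝ) :
    ∑ i ∈ s, (r i - (∑ j ∈ s, r j) / #s) ^ 2 ≤ ∑ i ∈ s, r i ^ 2 := by
  obtain rfl | hs := s.eq_empty_or_nonempty
  · simp
  generalize hμ : (∑ j ∈ s, r j) / #s = μ
  have hsum : ∑ j ∈ s, r j = #s * μ := by
    rw [← hμ, mul_div_cancel₀ _ (by positivity)]
  have hexpand : ∑ i ∈ s, (r i - μ) ^ 2 = ∑ i ∈ s, r i ^ 2 - #s * μ ^ 2 := by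
    simp only [sub_sq, sum_add_distrib, sum_sub_distrib, sum_const, nsmul_eq_mul]
    rw [← sum_mul, ← mul_sum, hsum]
    ring
  rw [hexpand, sub_le_self_iff]
  exact mul_nonneg (Nat.cast_nonneg _) (sq_nonneg μ)

/-- Each pair contributes `(a - μ)² + (-a - μ)² = 2a² + 2μ² ≥ 2a²`. -/
theorem le_sum_sq_sub_of_alternating (r : ℕ → ℝ) (a μ : ℝ) {p t : ℕ} (hpt : 2 * p + 1 ≤ t)
    (heven : ∀ j ∈ Icc 1 p, r (2 * j) = a) (hodd : ∀ j ∈ Icc 1 p, r (2 * j + 1) = -a) :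
    2 * p * a ^ 2 ≤ ∑ i ∈ Icc 1 t, (r i - μ) ^ 2 := by
  refine le_trans ?_
    (sum_le_sum_of_subset_of_nonneg (Icc_subset_Icc_right hpt) fun _ _ _ => sq_nonneg _)
  induction p with
  | zero => simpa using sq_nonneg _
  | succ p ih =>
    have hsub : Icc 1 p ⊆ Icc 1 (p + 1) := Icc_subset_Icc_right p.le_succ
    have hlast : p + 1 ∈ Icc 1 (p + 1) := by simp
    rw [show 2 * (p + 1) + 1 = 2 * p + 1 + 1 + 1 by ring, sum_Icc_succ_top (by omega),
      sum_Icc_succ_top (by omega), show 2 * p + 1 + 1 = 2 * (p + 1) by ring, heven _ hlast,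
      hodd _ hlast]
    have := ih (by omega) (fun j hj => heven j (hsub hj)) (fun j hj => hodd j (hsub hj))
    push_cast
    nlinarith [sq_nonneg μ]

theorem sq_log_div_le_sq_log {c d k : ℝ} (hc : 1 ≤ c) (hck : c ≤ k) (hd : 1 ≤ d)
    (hdk : d ≤ k) : log (c / d) ^ 2 ≤ log k ^ 2 := by
  rw [log_div (by positivity) (by positivity)]
  have hc0 := log_nonneg hc
  have hd0 := log_nonneg hd
  have hck' := log_le_log (by positivity) hck
  have hdk' := log_le_log (by positivity) hdk
  exact sq_le_sq' (by linarith) (by linarith)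

theorem sum_Icc_one_eq_add_sum_Ioc {M : Type*} [AddCommMonoid M] {n m : ℕ} (hnm : n ≤ m)
    (g : ℕ → M) : ∑ i ∈ Icc 1 m, g i = ∑ i ∈ Icc 1 n, g i + ∑ i ∈ Ioc n m, g i := by
  have hIcc (x : ℕ) : Icc 1 x = Ioc 0 x := Icc_add_one_left_eq_Ioc 0 x
  rw [hIcc, hIcc, sum_Ioc_consecutive _ n.zero_le hnm]

theorem phi1_eq_of_forall_eq {Sp : ℕ → ℕ → ℝ} {T : Finset ℕ} {t : ℕ} {c : ℝ} (hT : T.Nonempty)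
    (h : ∀ i ∈ T, Sp i t = c) : phi1 Sp T t = c := by
  rw [phi1, sum_congr rfl h, sum_const, nsmul_eq_mul, mul_div_cancel_left₀ _ (by positivity)]

theorem sum_sq_sub_avgRet_le_sum_sq_ret (Sp : ℕ → ℕ → ℝ) (T : Finset ℕ) (t : ℕ) :
    ∑ i ∈ Icc 1 t, (ret Sp T i - avgRet Sp T t) ^ 2 ≤ ∑ i ∈ Icc 1 t, ret Sp T i ^ 2 := by
  simpa [avgRet] using (Icc 1 t).sum_sq_sub_mean_le_sum_sq (ret Sp T)

theorem vol_le_mul_vol {Sp : ℕ → ℕ → ℝ} {T U : Finset ℕ} {t : ℕ} {β : ℝ} (ht : 1 ≤ t)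
    (hβ : 0 ≤ β)
    (h : ∑ i ∈ Icc 1 t, (ret Sp T i - avgRet Sp T t) ^ 2 ≤
      β ^ 2 * ∑ i ∈ Icc 1 t, (ret Sp U i - avgRet Sp U t) ^ 2) :
    vol Sp T t ≤ β * vol Sp U t := by
  have ht' : (0 : ℝ) ≤ t - 1 := by
    have : (1 : ℝ) ≤ t := by exact_mod_cast ht
    linarith
  rw [vol, vol, ← sqrt_sq hβ, ← sqrt_mul (sq_nonneg β), mul_div_assoc']
  exact sqrt_le_sqrt (div_le_div_of_nonneg_right h ht')

theorem sub_lt_mul_floor_div {α : ℝ} (hα : 0 < α) (x : ℝ) : x - α < α * ⌊x / α⌋ := by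
  have := mul_lt_mul_of_pos_left (Int.sub_one_lt_floor (x / α)) hα
  rwa [mul_sub, mul_div_cancel₀ _ hα.ne', mul_one] at this

theorem construction_constants_bounds {k q B : ℕ} {α β : ℝ} (hk : 2 ≤ k) (hα : 0 < α) (hβ : 0 < β)
    (hq : (q : ℤ) = ⌈max (1 + 4 / β) (log (2 / α) / log k)⌉)
    (hB : (B : ℤ) = ⌈α * (k : ℝ) ^ q⌉) :
    2 ≤ (B : ℝ) ∧ α * k ≤ B ∧ (k : ℝ) ≤ ⌊(B : ℝ) / α⌋ ∧ log k ≤ β * log ⌊(B : ℝ) / α⌋ := by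
  have hq' : max (1 + 4 / β) (log (2 / α) / log k) ≤ q := by
    have := Int.le_ceil (max (1 + 4 / β) (log (2 / α) / log k))
    rw [← hq] at this
    exact_mod_cast this
  have hB' : α * (k : ℝ) ^ q ≤ B := by
    have := Int.le_ceil (α * (k : ℝ) ^ q)
    rw [← hB] at this
    exact_mod_cast this
  have hk1 : (1 : ℝ) < k := by exact_mod_cast hk
  have hβq : 1 ≤ β * q := by
    have h := mul_le_mul_of_nonneg_left ((le_max_left _ _).trans hq') hβ.le
    rw [mul_add, mul_div_cancel₀ _ hβ.ne'] at h
    linarith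
  have hq0 : q ≠ 0 := by
    rintro rfl
    norm_num at hβq
  have hkq : 2 / α ≤ (k : ℝ) ^ q :=
    (le_pow_iff_log_le (by positivity) (by positivity)).2
      ((div_le_iff₀ (log_pos hk1)).1 ((le_max_right _ _).trans hq'))
  have hkk : (k : ℝ) ≤ k ^ q := le_self_pow₀ hk1.le hq0
  have hkF : (k : ℝ) ^ q ≤ ⌊(B : ℝ) / α⌋ := by
    have : ((k ^ q : ℕ) : ℤ) ≤ ⌊(B : ℝ) / α⌋ :=
      Int.le_floor.2 (by push_cast; rw [le_div_iff₀ hα]; linarith)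
    exact_mod_cast this
  refine ⟨?_, (mul_le_mul_of_nonneg_left hkk hα.le).trans hB', hkk.trans hkF, ?_⟩
  · have := mul_le_mul_of_nonneg_left hkq hα.le
    rw [mul_div_cancel₀ _ hα.ne'] at this
    linarith
  · calc log k ≤ β * q * log k := le_mul_of_one_le_left (log_nonneg hk1.le) hβq
      _ = β * log ((k : ℝ) ^ q) := by rw [log_pow]; ring
      _ ≤ β * log ⌊(B : ℝ) / α⌋ := by gcongr

/-- The adjustment rows `n + 1, …, n + k + 1` are the rows `min (n + t / 2) m` of the even times
`t = 2, …, 2 (k + 1)`. -/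
theorem exists_even_time_adjustment_row_not_mem {n m k P : ℕ} {T : Finset ℕ} (hTk : #T = k)
    (hkm : n + (k + 1) ≤ m) (hkP : 2 * (k + 1) ≤ P) :
    ∃ t, 1 ≤ t ∧ t ≤ P ∧ t % 2 = 0 ∧ min (n + t / 2) m ∉ T := by
  obtain ⟨e, he, heT⟩ := exists_mem_notMem_of_card_lt_card (s := T) (t := Ioc n (n + (k + 1)))
    (by simp [hTk])
  rw [mem_Ioc] at he
  refine ⟨2 * (e - n), by omega, by omega, by omega, ?_⟩
  rwa [show min (n + 2 * (e - n) / 2) m = e by omega]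

def MeetsPerformanceBound (Sp : ℕ → ℕ → ℝ) (m f : ℕ) (α : ℝ) (T : Finset ℕ) : Prop :=
  ∀ t ∈ Icc 1 f, phi1 Sp T t / phi1 Sp T 0 ≥ α * (phi1 Sp (Icc 1 m) t / phi1 Sp (Icc 1 m) 0)

/-- `F` stands for `⌊B / α⌋`. -/
structure IsCoverPrices (C : ℕ → Finset ℕ) (n m k P f : ℕ) (v₁ v₂ F : ℝ)
    (Sp : ℕ → ℕ → ℝ) : Prop where
  initial : ∀ i ∈ Icc 1 m, Sp i 0 = v₁
  padding_coding : ∀ t, 1 ≤ t → t ≤ P → ∀ i ∈ Icc 1 n, Sp i t = v₁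
  padding_even : ∀ t, 1 ≤ t → t ≤ P → t % 2 = 0 →
    Sp (min (n + t / 2) m) t = ((m : ℝ) - n) * (F - 1) ∧
    ∀ i, n < i → i ≤ m → i ≠ min (n + t / 2) m → Sp i t = 0
  padding_odd : ∀ t, 1 ≤ t → t ≤ P → t % 2 = 1 → ∀ i, n < i → i ≤ m → Sp i t = 0
  coding : ∀ t, P < t → t ≤ f →
    (∀ i ∈ Icc 1 n, Sp i t = if t - P ∈ C i then v₂ else 0) ∧
    (∀ i, n < i → i < m → Sp i t = 0) ∧
    Sp m t = ((m : ℝ) - n) * (F - k) + (#{i ∈ Icc 1 n | t - P ∉ C i} : ℝ) * v₂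

namespace IsCoverPrices

variable {C : ℕ → Finset ℕ} {n m k P f : ℕ} {v₁ v₂ F α : ℝ} {Sp : ℕ → ℕ → ℝ}
  {T : Finset ℕ} {t : ℕ}

theorem sum_market_odd (H : IsCoverPrices C n m k P f v₁ v₂ F Sp) (hnm : n ≤ m) (ht : 1 ≤ t)
    (htP : t ≤ P) (hodd : t % 2 = 1) : ∑ i ∈ Icc 1 m, Sp i t = n * v₁ := by
  rw [sum_Icc_one_eq_add_sum_Ioc hnm, sum_congr rfl (H.padding_coding t ht htP),
    sum_eq_zero fun i hi => H.padding_odd t ht htP hodd i (mem_Ioc.1 hi).1 (mem_Ioc.1 hi).2]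
  simp

theorem sum_market_even (H : IsCoverPrices C n m k P f v₁ v₂ F Sp) (hnm : n < m)
    (hmv : (m : ℝ) - n = n * v₁) (ht : 1 ≤ t) (htP : t ≤ P) (heven : t % 2 = 0) :
    ∑ i ∈ Icc 1 m, Sp i t = n * v₁ * F := by
  obtain ⟨hA, hzero⟩ := H.padding_even t ht htP heven
  have hmem : min (n + t / 2) m ∈ Ioc n m := by
    simp only [mem_Ioc]
    omega
  rw [sum_Icc_one_eq_add_sum_Ioc hnm.le, sum_congr rfl (H.padding_coding t ht htP),
    sum_eq_single_of_mem _ hmem fun i hi hne => hzero i (mem_Ioc.1 hi).1 (mem_Ioc.1 hi).2 hne,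
    hA, hmv]
  simp only [sum_const, Nat.card_Icc, add_tsub_cancel_right, nsmul_eq_mul]
  ring

theorem sum_market_coding (H : IsCoverPrices C n m k P f v₁ v₂ F Sp) (hnm : n < m)
    (hmv : (m : ℝ) - n = n * v₁) (hv₂ : v₂ = k * v₁) (htP : P < t) (htf : t ≤ f) :
    ∑ i ∈ Icc 1 m, Sp i t = n * v₁ * F := by
  obtain ⟨hrows, hzero, hlast⟩ := H.coding t htP htf
  have hmem : m ∈ Ioc n m := by simp [hnm]
  have hcard : (#{i ∈ Icc 1 n | t - P ∈ C i} : ℝ) + #{i ∈ Icc 1 n | t - P ∉ C i} = n := by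
    have := (Icc 1 n).card_filter_add_card_filter_not (fun i => t - P ∈ C i)
    rw [Nat.card_Icc, add_tsub_cancel_right] at this
    exact_mod_cast this
  rw [sum_Icc_one_eq_add_sum_Ioc hnm.le, sum_congr rfl hrows, sum_ite, sum_const_zero, add_zero,
    sum_eq_single_of_mem _ hmem fun i hi hne =>
      hzero i (mem_Ioc.1 hi).1 (lt_of_le_of_ne (mem_Ioc.1 hi).2 hne),
    hlast, hmv, sum_const, nsmul_eq_mul, hv₂]
  linear_combination k * v₁ * hcard

theorem phi1_market_initial (H : IsCoverPrices C n m k P f v₁ v₂ F Sp) (hm : 1 ≤ m) :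
    phi1 Sp (Icc 1 m) 0 = v₁ :=
  phi1_eq_of_forall_eq (nonempty_Icc.2 hm) H.initial

theorem ret_market_even (H : IsCoverPrices C n m k P f v₁ v₂ F Sp) (hnm : n < m)
    (hmv : (m : ℝ) - n = n * v₁) (hn : 0 < n) (hv₁ : 0 < v₁) {j : ℕ} (hj : 1 ≤ j)
    (hjP : 2 * j ≤ P) : ret Sp (Icc 1 m) (2 * j) = log F := by
  have hm : (0 : ℝ) < #(Icc 1 m) := by simp; omega
  rw [ret, phi1, phi1, H.sum_market_even hnm hmv (by omega) hjP (by omega),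
    H.sum_market_odd hnm.le (by omega) (by omega) (by omega), mul_div_right_comm,
    mul_div_cancel_left₀ _ (by positivity)]

theorem ret_market_odd (H : IsCoverPrices C n m k P f v₁ v₂ F Sp) (hnm : n < m)
    (hmv : (m : ℝ) - n = n * v₁) (hn : 0 < n) (hv₁ : 0 < v₁) {j : ℕ} (hj : 1 ≤ j)
    (hjP : 2 * j + 1 ≤ P) : ret Sp (Icc 1 m) (2 * j + 1) = -log F := by
  have hm : (0 : ℝ) < #(Icc 1 m) := by simp; omega
  rw [ret, phi1, phi1, H.sum_market_odd hnm.le (by omega) hjP (by omega), add_tsub_cancel_right,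
    H.sum_market_even hnm hmv (by omega) (by omega) (by omega), mul_div_right_comm (_ * v₁),
    div_mul_cancel_left₀ (by positivity), log_inv]

theorem le_sum_sq_sub_avgRet_market (H : IsCoverPrices C n m k P f v₁ v₂ F Sp) (hnm : n < m)
    (hmv : (m : ℝ) - n = n * v₁) (hn : 0 < n) (hv₁ : 0 < v₁) {p : ℕ} (hpP : 2 * p + 1 ≤ P)
    (hPt : P ≤ t) :
    2 * p * log F ^ 2 ≤ ∑ i ∈ Icc 1 t, (ret Sp (Icc 1 m) i - avgRet Sp (Icc 1 m) t) ^ 2 :=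
  le_sum_sq_sub_of_alternating _ _ _ (hpP.trans hPt)
    (fun j hj => H.ret_market_even hnm hmv hn hv₁ (mem_Icc.1 hj).1
      (by have := (mem_Icc.1 hj).2; omega))
    (fun j hj => H.ret_market_odd hnm hmv hn hv₁ (mem_Icc.1 hj).1
      (by have := (mem_Icc.1 hj).2; omega))

theorem le_phi1_div_of_performance (H : IsCoverPrices C n m k P f v₁ v₂ F Sp) (hnm : n < m)
    (hv₁ : 0 < v₁) (hT : T ⊆ Icc 1 m) (hTne : T.Nonempty)
    (hperf : MeetsPerformanceBound Sp m f α T) (ht : t ∈ Icc 1 f)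
    (hsum : ∑ i ∈ Icc 1 m, Sp i t = n * v₁ * F) : α * (n * F / m) ≤ phi1 Sp T t / v₁ := by
  have h := hperf t ht
  have hmarket : phi1 Sp (Icc 1 m) t = n * v₁ * F / m := by
    rw [phi1, hsum, Nat.card_Icc, add_tsub_cancel_right]
  rw [H.phi1_market_initial (by omega), hmarket,
    phi1_eq_of_forall_eq hTne fun i hi => H.initial i (hT hi)] at h
  convert h using 2
  field_simp

theorem sum_eq_card_filter_mul_of_not_mem (H : IsCoverPrices C n m k P f v₁ v₂ F Sp)
    (hT : T ⊆ Icc 1 m) (ht : 1 ≤ t) (htP : t ≤ P) (heven : t % 2 = 0)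
    (hnot : min (n + t / 2) m ∉ T) : ∑ i ∈ T, Sp i t = #{i ∈ T | i ≤ n} * v₁ := by
  have hval : ∀ i ∈ T, Sp i t = if i ≤ n then v₁ else 0 := by
    intro i hi
    have hi' := mem_Icc.1 (hT hi)
    split_ifs with hin
    · exact H.padding_coding t ht htP i (mem_Icc.2 ⟨hi'.1, hin⟩)
    · exact (H.padding_even t ht htP heven).2 i (by omega) hi'.2 (ne_of_mem_of_not_mem hi hnot)
  rw [sum_congr rfl hval, sum_ite, sum_const, sum_const_zero, add_zero, nsmul_eq_mul]

/-- At an even time whose adjustment row the portfolio misses, the market grows by `F / B`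
while a portfolio with a non-coding row grows by at most `(k - 1) / k`; the choice of `B` makes
this violate the performance bound. -/
theorem subset_coding_rows_of_performance (H : IsCoverPrices C n m k P f v₁ v₂ F Sp) {B : ℝ}
    (hn : 0 < n) (hnm : n < m) (hmv : (m : ℝ) - n = n * v₁) (hmB : (m : ℝ) = n * B)
    (hv₁ : 0 < v₁) (hF : B - α < α * F) (hαk : α * k ≤ B) (hkm : n + (k + 1) ≤ m)
    (hkP : 2 * (k + 1) ≤ P) (hPf : P ≤ f) (hT : T ⊆ Icc 1 m) (hTk : #T = k)
    (hperf : MeetsPerformanceBound Sp m f α T) : T ⊆ Icc 1 n := by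
  obtain rfl | hTne := T.eq_empty_or_nonempty
  · exact empty_subset _
  obtain ⟨t, ht, htP, heven, hnot⟩ := exists_even_time_adjustment_row_not_mem hTk hkm hkP
  have hbound := H.le_phi1_div_of_performance hnm hv₁ hT hTne hperf
    (mem_Icc.2 ⟨ht, htP.trans hPf⟩) (H.sum_market_even hnm hmv ht htP heven)
  rw [phi1, H.sum_eq_card_filter_mul_of_not_mem hT ht htP heven hnot, hTk, hmB] at hbound
  intro i hi
  by_contra hin
  have hlt : #{i ∈ T | i ≤ n} < k := hTk ▸ card_lt_card (filter_ssubset.2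
    ⟨i, hi, fun h => hin (mem_Icc.2 ⟨(mem_Icc.1 (hT hi)).1, h⟩)⟩)
  have hlt' : (#{i ∈ T | i ≤ n} : ℝ) + 1 ≤ k := by exact_mod_cast hlt
  have hk : (0 : ℝ) < k := by exact_mod_cast hTk ▸ hTne.card_pos
  have hn' : (0 : ℝ) < n := by exact_mod_cast hn
  have hB : 0 < B := pos_of_mul_pos_right (hmB ▸ (by exact_mod_cast hn.trans hnm)) hn'.le
  have key : α * F * k ≤ #{i ∈ T | i ≤ n} * B := by
    rw [mul_div_mul_left _ _ hn'.ne', show (#{i ∈ T | i ≤ n} : ℝ) * v₁ / k / v₁ =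
      #{i ∈ T | i ≤ n} / k by field_simp, ← mul_div_assoc, div_le_div_iff₀ hB hk] at hbound
    exact hbound
  nlinarith [mul_lt_mul_of_pos_right hF hk]

theorem phi1_of_subset_padding (H : IsCoverPrices C n m k P f v₁ v₂ F Sp) (hnm : n ≤ m)
    (hTn : T ⊆ Icc 1 n) (hTne : T.Nonempty) (htP : t ≤ P) : phi1 Sp T t = v₁ :=
  phi1_eq_of_forall_eq hTne fun i hi => by
    rcases Nat.eq_zero_or_pos t with rfl | ht
    · exact H.initial i (Icc_subset_Icc_right hnm (hTn hi))
    · exact H.padding_coding t ht htP i (hTn hi)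

theorem ret_of_subset_padding (H : IsCoverPrices C n m k P f v₁ v₂ F Sp) (hnm : n ≤ m)
    (hTn : T ⊆ Icc 1 n) (hTne : T.Nonempty) (hv₁ : v₁ ≠ 0) (htP : t ≤ P) : ret Sp T t = 0 := by
  rw [ret, H.phi1_of_subset_padding hnm hTn hTne htP,
    H.phi1_of_subset_padding hnm hTn hTne (by omega), div_self hv₁, log_one]

theorem phi1_of_subset_coding (H : IsCoverPrices C n m k P f v₁ v₂ F Sp) (hTn : T ⊆ Icc 1 n)
    (hTk : #T = k) (hk : k ≠ 0) (hv₂ : v₂ = k * v₁) (htP : P < t) (htf : t ≤ f) :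
    phi1 Sp T t = #{i ∈ T | t - P ∈ C i} * v₁ := by
  rw [phi1, sum_congr rfl fun i hi => (H.coding t htP htf).1 i (hTn hi), sum_ite, sum_const,
    sum_const_zero, add_zero, nsmul_eq_mul, hTk, hv₂]
  field_simp

theorem one_le_card_filter_of_performance (H : IsCoverPrices C n m k P f v₁ v₂ F Sp)
    (hn : 0 < n) (hnm : n < m) (hmv : (m : ℝ) - n = n * v₁) (hv₁ : 0 < v₁) (hv₂ : v₂ = k * v₁)
    (hα : 0 < α) (hF : 0 < F) (hTn : T ⊆ Icc 1 n) (hTk : #T = k) (hk : k ≠ 0)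
    (hperf : MeetsPerformanceBound Sp m f α T) (htP : P < t) (htf : t ≤ f) :
    1 ≤ #{i ∈ T | t - P ∈ C i} := by
  have hTne : T.Nonempty := card_pos.1 (hTk ▸ Nat.pos_of_ne_zero hk)
  have h := H.le_phi1_div_of_performance hnm hv₁ (hTn.trans (Icc_subset_Icc_right hnm.le)) hTne
    hperf (mem_Icc.2 ⟨by omega, htf⟩) (H.sum_market_coding hnm hmv hv₂ htP htf)
  rw [H.phi1_of_subset_coding hTn hTk hk hv₂ htP htf, mul_div_cancel_right₀ _ hv₁.ne'] at h
  have hn' : (0 : ℝ) < n := by exact_mod_cast hn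
  have hm' : (0 : ℝ) < m := by exact_mod_cast hn.trans hnm
  have : (0 : ℝ) < #{i ∈ T | t - P ∈ C i} := lt_of_lt_of_le (by positivity) h
  exact_mod_cast this

/-- Once every coding column is covered, the portfolio index stays between `v₁` and `k v₁`, so no
one-period return exceeds `log k` in absolute value. -/
theorem sq_ret_le_of_subset (H : IsCoverPrices C n m k P f v₁ v₂ F Sp) (hnm : n ≤ m)
    (hv₁ : 0 < v₁) (hv₂ : v₂ = k * v₁) (hTn : T ⊆ Icc 1 n) (hTk : #T = k) (hk : 1 ≤ k)
    (hcov : ∀ u, P < u → u ≤ f → 1 ≤ #{i ∈ T | u - P ∈ C i}) (htP : P < t) (htf : t ≤ f) :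
    ret Sp T t ^ 2 ≤ log k ^ 2 := by
  have hTne : T.Nonempty := card_pos.1 (by omega)
  have hk' : (1 : ℝ) ≤ k := by exact_mod_cast hk
  have hcard (u : ℕ) : (#{i ∈ T | u - P ∈ C i} : ℝ) ≤ k := by
    exact_mod_cast hTk ▸ card_filter_le _ _
  obtain ⟨d, hd1, hdk, hprev⟩ : ∃ d : ℝ, 1 ≤ d ∧ d ≤ k ∧ phi1 Sp T (t - 1) = d * v₁ := by
    rcases le_or_gt (t - 1) P with h | h
    · exact ⟨1, le_rfl, hk', by rw [H.phi1_of_subset_padding hnm hTn hTne h, one_mul]⟩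
    · exact ⟨_, by exact_mod_cast hcov _ h (by omega), hcard _,
        H.phi1_of_subset_coding hTn hTk (by omega) hv₂ h (by omega)⟩
  rw [ret, H.phi1_of_subset_coding hTn hTk (by omega) hv₂ htP htf, hprev,
    mul_div_mul_right _ _ hv₁.ne']
  exact sq_log_div_le_sq_log (by exact_mod_cast hcov t htP htf) (hcard t) hd1 hdk

theorem sum_sq_ret_le_of_subset (H : IsCoverPrices C n m k P f v₁ v₂ F Sp) (hnm : n ≤ m)
    (hv₁ : 0 < v₁) (hv₂ : v₂ = k * v₁) (hTn : T ⊆ Icc 1 n) (hTk : #T = k) (hk : 1 ≤ k)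
    (hcov : ∀ u, P < u → u ≤ f → 1 ≤ #{i ∈ T | u - P ∈ C i}) (htf : t ≤ f) :
    ∑ i ∈ Icc 1 t, ret Sp T i ^ 2 ≤ (t - P : ℕ) * log k ^ 2 := by
  have hTne : T.Nonempty := card_pos.1 (by omega)
  have hpad (u : ℕ) (hu : u ≤ P) : ret Sp T u ^ 2 = 0 := by
    rw [H.ret_of_subset_padding hnm hTn hTne hv₁.ne' hu, sq, zero_mul]
  rcases le_or_gt t P with htP | htP
  · rw [sum_eq_zero fun i hi => hpad i ((mem_Icc.1 hi).2.trans htP)]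
    positivity
  rw [sum_Icc_one_eq_add_sum_Ioc htP.le, sum_eq_zero fun i hi => hpad i (mem_Icc.1 hi).2,
    zero_add, ← Nat.card_Ioc, ← nsmul_eq_mul]
  exact sum_le_card_nsmul _ _ _ fun i hi =>
    H.sq_ret_le_of_subset hnm hv₁ hv₂ hTn hTk hk hcov (mem_Ioc.1 hi).1 ((mem_Ioc.1 hi).2.trans htf)

theorem mul_sq_log_le_sum_sq_sub_avgRet_market (H : IsCoverPrices C n m k P f v₁ v₂ F Sp)
    (hnm : n < m) (hmv : (m : ℝ) - n = n * v₁) (hn : 0 < n) (hv₁ : 0 < v₁) (s : ℕ) {β : ℝ}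
    (hsP : s + 2 ≤ P) (hts : t ≤ P + s) (hlog : log k ≤ β * log F) :
    ((t - P : ℕ) : ℝ) * log k ^ 2 ≤
      β ^ 2 * ∑ i ∈ Icc 1 t, (ret Sp (Icc 1 m) i - avgRet Sp (Icc 1 m) t) ^ 2 := by
  rcases le_or_gt t P with htP | htP
  · rw [Nat.sub_eq_zero_of_le htP, Nat.cast_zero, zero_mul]
    positivity
  have hlog0 := log_natCast_nonneg k
  calc ((t - P : ℕ) : ℝ) * log k ^ 2 ≤ (2 * ((s + 1) / 2) : ℕ) * (β * log F) ^ 2 := by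
        gcongr
        omega
    _ = β ^ 2 * (2 * ((s + 1) / 2 : ℕ) * log F ^ 2) := by push_cast; ring
    _ ≤ _ := by
      gcongr
      exact H.le_sum_sq_sub_avgRet_market hnm hmv hn hv₁ (by omega) htP.le

end IsCoverPrices

theorem stmt_7_general
    -- the minimum-cover instance
    (s n K : ℕ) (C : ℕ → Finset ℕ)
    (hK2 : 2 ≤ K) (hKn : K < n)
    -- the performance and volatility parameters
    (α β : ℝ) (hα : 0 < α) (hβ : 0 < β)
    -- constants of the construction
    (k P q B m f : ℕ) (hk : k = K)
    (hP : P = max (2 * (k + 1)) (2 * s))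
    (hq : (q : ℤ) = ⌈max (1 + 4 / β) (Real.log (2 / α) / Real.log k)⌉)
    (hB : (B : ℤ) = ⌈α * (k : ℝ) ^ q⌉)
    (hm : m = n * B) (hf : f = P + s)
    (v₁ v₂ : ℝ) (hv₁ : v₁ = (B : ℝ) - 1) (hv₂ : v₂ = (k : ℝ) * ((B : ℝ) - 1))
    -- the constructed prices
    (Sp : ℕ → ℕ → ℝ)
    (h0 : ∀ i ∈ Finset.Icc 1 m, Sp i 0 = v₁)
    (hpad1 : ∀ t, 1 ≤ t → t ≤ P → ∀ i ∈ Finset.Icc 1 n, Sp i t = v₁)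
    (hpadEven : ∀ t, 1 ≤ t → t ≤ P → t % 2 = 0 →
      Sp (min (n + t / 2) m) t =
        ((m : ℝ) - n) * ((⌊(B : ℝ) / α⌋ : ℤ) - 1) ∧
      ∀ i, n < i → i ≤ m → i ≠ min (n + t / 2) m → Sp i t = 0)
    (hpadOdd : ∀ t, 1 ≤ t → t ≤ P → t % 2 = 1 →
      ∀ i, n < i → i ≤ m → Sp i t = 0)
    (hcode : ∀ t, P < t → t ≤ f →
      (∀ i ∈ Finset.Icc 1 n, Sp i t = if t - P ∈ C i then v₂ else 0) ∧
      (∀ i, n < i → i < m → Sp i t = 0) ∧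
      Sp m t = ((m : ℝ) - n) * ((⌊(B : ℝ) / α⌋ : ℤ) - (k : ℝ)) +
        (((Finset.Icc 1 n).filter (fun i => t - P ∉ C i)).card : ℝ) * v₂) :
    -- statement 7
    ∀ T ⊆ Finset.Icc 1 m, T.card = k →
      (∀ t ∈ Finset.Icc 1 f,
        phi1 Sp T t / phi1 Sp T 0 ≥
          α * (phi1 Sp (Finset.Icc 1 m) t / phi1 Sp (Finset.Icc 1 m) 0)) →
      ∀ t ∈ Finset.Icc 2 f,
        vol Sp T t ≤ β * vol Sp (Finset.Icc 1 m) t := by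
  subst hk
  intro T hT hTk hperf t ht
  obtain ⟨hB2, hαk, hkF, hlogF⟩ := construction_constants_bounds hK2 hα hβ hq hB
  set F : ℝ := ((⌊(B : ℝ) / α⌋ : ℤ) : ℝ)
  have H : IsCoverPrices C n m k P f v₁ v₂ F Sp := ⟨h0, hpad1, hpadEven, hpadOdd, hcode⟩
  have hmB : (m : ℝ) = n * B := by exact_mod_cast hm
  have hmv : (m : ℝ) - n = n * v₁ := by rw [hmB, hv₁]; ring
  have hv₂' : v₂ = k * v₁ := by rw [hv₂, hv₁]
  have hv₁0 : 0 < v₁ := by rw [hv₁]; linarith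
  have hkm : n + (k + 1) ≤ m := by
    rw [hm]
    nlinarith [show 2 ≤ B by exact_mod_cast hB2]
  have hF0 : 0 < F := lt_of_lt_of_le (by positivity) hkF
  have hTn := H.subset_coding_rows_of_performance (by omega) (by omega) hmv hmB hv₁0
    (sub_lt_mul_floor_div hα B) hαk hkm (by omega) (by omega) hT hTk hperf
  have hcov (u : ℕ) (hu : P < u) (huf : u ≤ f) :=
    H.one_le_card_filter_of_performance (by omega) (by omega) hmv hv₁0 hv₂' hα hF0 hTn hTk
      (by omega) hperf hu huf
  obtain ⟨ht2, htf⟩ := mem_Icc.1 ht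
  refine vol_le_mul_vol (by omega) hβ.le ((sum_sq_sub_avgRet_le_sum_sq_ret Sp T t).trans ?_)
  exact (H.sum_sq_ret_le_of_subset (by omega) hv₁0 hv₂' hTn hTk (by omega) hcov htf).trans
    (H.mul_sq_log_le_sum_sq_sub_avgRet_market (by omega) hmv (by omega) hv₁0 s (by omega)
      (by omega) hlogF)

theorem stmt_7
    -- the minimum-cover instance
    (s n K : ℕ) (hs : 1 ≤ s) (C : ℕ → Finset ℕ)
    (hC : ∀ i ∈ Finset.Icc 1 n, C i ⊆ Finset.Icc 1 s)
    (hK2 : 2 ≤ K) (hKn : K < n)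
    -- the performance and volatility parameters
    (α β : ℝ) (hα : 0 < α) (hβ : 0 < β)
    -- constants of the construction
    (k P q B m f : ℕ) (hk : k = K)
    (hP : P = max (2 * (k + 1)) (2 * s))
    (hq : (q : ℤ) = ⌈max (1 + 4 / β) (Real.log (2 / α) / Real.log k)⌉)
    (hB : (B : ℤ) = ⌈α * (k : ℝ) ^ q⌉)
    (hm : m = n * B) (hf : f = P + s)
    (v₁ v₂ : ℝ) (hv₁ : v₁ = (B : ℝ) - 1) (hv₂ : v₂ = (k : ℝ) * ((B : ℝ) - 1))
    -- the constructed prices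
    (Sp : ℕ → ℕ → ℝ)
    (h0 : ∀ i ∈ Finset.Icc 1 m, Sp i 0 = v₁)
    (hpad1 : ∀ t, 1 ≤ t → t ≤ P → ∀ i ∈ Finset.Icc 1 n, Sp i t = v₁)
    (hpadEven : ∀ t, 1 ≤ t → t ≤ P → t % 2 = 0 →
      Sp (min (n + t / 2) m) t =
        ((m : ℝ) - n) * ((⌊(B : ℝ) / α⌋ : ℤ) - 1) ∧
      ∀ i, n < i → i ≤ m → i ≠ min (n + t / 2) m → Sp i t = 0)
    (hpadOdd : ∀ t, 1 ≤ t → t ≤ P → t % 2 = 1 →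
      ∀ i, n < i → i ≤ m → Sp i t = 0)
    (hcode : ∀ t, P < t → t ≤ f →
      (∀ i ∈ Finset.Icc 1 n, Sp i t = if t - P ∈ C i then v₂ else 0) ∧
      (∀ i, n < i → i < m → Sp i t = 0) ∧
      Sp m t = ((m : ℝ) - n) * ((⌊(B : ℝ) / α⌋ : ℤ) - (k : ℝ)) +
        (((Finset.Icc 1 n).filter (fun i => t - P ∉ C i)).card : ℝ) * v₂) :
    -- statement 7
    ∀ T ⊆ Finset.Icc 1 m, T.card = k →
      (∀ t ∈ Finset.Icc 1 f,
        phi1 Sp T t / phi1 Sp T 0 ≥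
          α * (phi1 Sp (Finset.Icc 1 m) t / phi1 Sp (Finset.Icc 1 m) 0)) →
      ∀ t ∈ Finset.Icc 2 f,
        vol Sp T t ≤ β * vol Sp (Finset.Icc 1 m) t :=
  stmt_7_general s n K C hK2 hKn α β hα hβ k P q B m f hk hP hq hB hm hf v₁ v₂ hv₁ hv₂ Sp h0 hpad1
    hpadEven hpadOdd hcode
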